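/- Maximum principle for the parabolic system operator: let y = (y_1,…,y_M) : [0,1] × [0,T] → ℝ^M be continuous, with each component y_k having a continuous time derivative ∂y_k/∂t and continuous second spatial derivative ∂²y_k/∂x² on (0,1) × (0,T]. If y(x,0) ≥ 0 for all x ∈ [0,1], y(0,t) ≥ 0 and y(1,t) ≥ 0 for all t ∈ [0,T], and (L_ε y)(x,t) ≥ 0 componentwise for all (x,t) ∈ (0,1) × (0,T], then y(x,t) ≥ 0 componentwise on all of [0,1] × [0,T]. -/
import Mathlib


/-- Maximum principle for the parabolic system operator `L_ε`. -/
theorem stmt_0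
    (M : ℕ) (hM : 2 ≤ M) (T : ℝ) (hT : 0 < T)
    (ε : ℝ) (hε : ε ∈ Set.Ioc (0:ℝ) 1)
    (βs : ℝ) (hβs : 0 < βs)
    (a : Fin M → Fin M → ℝ → ℝ)
    (ha_cont : ∀ k m, ContinuousOn (a k m) (Set.Icc 0 1))
    (ha_off : ∀ k m, k ≠ m → ∀ x ∈ Set.Icc (0:ℝ) 1, a k m x ≤ 0)
    (ha_diag : ∀ k, ∀ x ∈ Set.Icc (0:ℝ) 1, 0 < a k k x)
    (ha_sum : ∀ k, ∀ x ∈ Set.Icc (0:ℝ) 1, βs ≤ ∑ m, a k m x)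
    (y yx yxx yt : ℝ → ℝ → Fin M → ℝ)
    (hy_cont : ∀ k, ContinuousOn (fun p : ℝ × ℝ => y p.1 p.2 k)
      (Set.Icc 0 1 ×ˢ Set.Icc 0 T))
    (hyt : ∀ k, ∀ x ∈ Set.Ioo (0:ℝ) 1, ∀ t ∈ Set.Ioc (0:ℝ) T,
      HasDerivAt (fun s => y x s k) (yt x t k) t)
    (hyt_cont : ∀ k, ContinuousOn (fun p : ℝ × ℝ => yt p.1 p.2 k)
      (Set.Ioo 0 1 ×ˢ Set.Ioc 0 T))
    (hyx : ∀ k, ∀ x ∈ Set.Ioo (0:ℝ) 1, ∀ t ∈ Set.Ioc (0:ℝ) T,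
      HasDerivAt (fun w => y w t k) (yx x t k) x)
    (hyxx : ∀ k, ∀ x ∈ Set.Ioo (0:ℝ) 1, ∀ t ∈ Set.Ioc (0:ℝ) T,
      HasDerivAt (fun w => yx w t k) (yxx x t k) x)
    (hyxx_cont : ∀ k, ContinuousOn (fun p : ℝ × ℝ => yxx p.1 p.2 k)
      (Set.Ioo 0 1 ×ˢ Set.Ioc 0 T))
    (h_init : ∀ x ∈ Set.Icc (0:ℝ) 1, ∀ k, 0 ≤ y x 0 k)
    (h_bc0 : ∀ t ∈ Set.Icc (0:ℝ) T, ∀ k, 0 ≤ y 0 t k)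
    (h_bc1 : ∀ t ∈ Set.Icc (0:ℝ) T, ∀ k, 0 ≤ y 1 t k)
    (h_op : ∀ x ∈ Set.Ioo (0:ℝ) 1, ∀ t ∈ Set.Ioc (0:ℝ) T, ∀ k,
      0 ≤ yt x t k - ε * yxx x t k + ∑ m, a k m x * y x t m) :
    ∀ x ∈ Set.Icc (0:ℝ) 1, ∀ t ∈ Set.Icc (0:ℝ) T, ∀ k, 0 ≤ y x t k := by
  intro x hx t ht k
  by_contra hneg
  push_neg at hneg
  set S : Set (ℝ × ℝ) := Set.Icc 0 1 ×ˢ Set.Icc 0 T with hSdef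
  have hScomp : IsCompact S := isCompact_Icc.prod isCompact_Icc
  have hSne : S.Nonempty := ⟨(x, t), ⟨hx, ht⟩⟩
  -- minimum point for each component
  have hminex : ∀ m : Fin M, ∃ p ∈ S, ∀ q ∈ S, y p.1 p.2 m ≤ y q.1 q.2 m := by
    intro m
    obtain ⟨p, hp, hm⟩ := hScomp.exists_isMinOn hSne (hy_cont m)
    exact ⟨p, hp, fun q hq => hm hq⟩
  choose p hpS hpmin using hminex
  obtain ⟨k₀, -, hk₀⟩ := Finset.exists_min_image (Finset.univ : Finset (Fin M))
    (fun m => y (p m).1 (p m).2 m) ⟨k, Finset.mem_univ k⟩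
  set x₀ : ℝ := (p k₀).1 with hx₀def
  set t₀ : ℝ := (p k₀).2 with ht₀def
  set μ : ℝ := y x₀ t₀ k₀ with hμdef
  have hglobal : ∀ w ∈ Set.Icc (0:ℝ) 1, ∀ s ∈ Set.Icc (0:ℝ) T, ∀ m, μ ≤ y w s m := by
    intro w hw s hs m
    exact le_trans (hk₀ m (Finset.mem_univ m)) (hpmin m (w, s) ⟨hw, hs⟩)
  have hμneg : μ < 0 := lt_of_le_of_lt (hglobal x hx t ht k) hneg
  have hx₀mem : x₀ ∈ Set.Icc (0:ℝ) 1 := (hpS k₀).1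
  have ht₀mem : t₀ ∈ Set.Icc (0:ℝ) T := (hpS k₀).2
  have hx₀Ioo : x₀ ∈ Set.Ioo (0:ℝ) 1 := by
    refine ⟨lt_of_le_of_ne hx₀mem.1 ?_, lt_of_le_of_ne hx₀mem.2 ?_⟩
    · intro h
      have h2 : (0:ℝ) ≤ y x₀ t₀ k₀ := by rw [← h]; exact h_bc0 t₀ ht₀mem k₀
      exact absurd hμneg (not_lt.mpr h2)
    · intro h
      have h2 : (0:ℝ) ≤ y x₀ t₀ k₀ := by rw [h]; exact h_bc1 t₀ ht₀mem k₀
      exact absurd hμneg (not_lt.mpr h2)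
  have ht₀Ioc : t₀ ∈ Set.Ioc (0:ℝ) T := by
    refine ⟨lt_of_le_of_ne ht₀mem.1 ?_, ht₀mem.2⟩
    intro h
    have h2 : (0:ℝ) ≤ y x₀ t₀ k₀ := by rw [← h]; exact h_init x₀ hx₀mem k₀
    exact absurd hμneg (not_lt.mpr h2)
  -- time derivative is nonpositive at minimum
  have hdt : HasDerivAt (fun s => y x₀ s k₀) (yt x₀ t₀ k₀) t₀ :=
    hyt k₀ x₀ hx₀Ioo t₀ ht₀Ioc
  have hyt_le : yt x₀ t₀ k₀ ≤ 0 := by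
    have hwithin : HasDerivWithinAt (fun s => y x₀ s k₀) (yt x₀ t₀ k₀) (Set.Iio t₀) t₀ :=
      hdt.hasDerivWithinAt
    rw [hasDerivWithinAt_iff_tendsto_slope] at hwithin
    have hsub : Set.Iio t₀ \ {t₀} = Set.Iio t₀ :=
      Set.diff_singleton_eq_self (by simp)
    rw [hsub] at hwithin
    have hne : (nhdsWithin t₀ (Set.Iio t₀)).NeBot := by
      exact nhdsLT_neBot t₀
    refine le_of_tendsto hwithin ?_
    have hIoo : Set.Ioo (0:ℝ) t₀ ∈ nhdsWithin t₀ (Set.Iio t₀) :=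
      Ioo_mem_nhdsLT_of_mem ⟨ht₀Ioc.1, le_refl t₀⟩
    filter_upwards [hIoo] with s hs
    have hnum : 0 ≤ y x₀ s k₀ - y x₀ t₀ k₀ := by
      have := hglobal x₀ hx₀mem s ⟨hs.1.le, hs.2.le.trans ht₀mem.2⟩ k₀
      linarith
    have hden : s - t₀ ≤ 0 := by linarith [hs.2]
    have hdq : (y x₀ s k₀ - y x₀ t₀ k₀) / (s - t₀) ≤ 0 :=
      div_nonpos_iff.mpr (Or.inl ⟨hnum, hden⟩)
    simpa [slope_def_field] using hdq
  -- spatial derivative is zero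
  have hdx : HasDerivAt (fun w => y w t₀ k₀) (yx x₀ t₀ k₀) x₀ :=
    hyx k₀ x₀ hx₀Ioo t₀ ht₀Ioc
  have hlocmin : IsLocalMin (fun w => y w t₀ k₀) x₀ := by
    have hmem : Set.Icc (0:ℝ) 1 ∈ nhds x₀ := Icc_mem_nhds hx₀Ioo.1 hx₀Ioo.2
    filter_upwards [hmem] with w hw
    exact hglobal w hw t₀ ht₀mem k₀
  have hyx_zero : yx x₀ t₀ k₀ = 0 := hlocmin.hasDerivAt_eq_zero hdx
  -- second spatial derivative is nonnegative
  have hyxx_nonneg : 0 ≤ yxx x₀ t₀ k₀ := by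
    by_contra hlt
    push_neg at hlt
    have hdxx : HasDerivAt (fun w => yx w t₀ k₀) (yxx x₀ t₀ k₀) x₀ :=
      hyxx k₀ x₀ hx₀Ioo t₀ ht₀Ioc
    rw [hasDerivAt_iff_tendsto_slope] at hdxx
    have hright : Filter.Tendsto (slope (fun w => yx w t₀ k₀) x₀)
        (nhdsWithin x₀ (Set.Ioi x₀)) (nhds (yxx x₀ t₀ k₀)) :=
      hdxx.mono_left (nhdsWithin_mono x₀ (fun w hw => Set.mem_compl_singleton_iff.mpr
        (ne_of_gt hw)))
    have hslope_neg : ∀ᶠ w in nhdsWithin x₀ (Set.Ioi x₀),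
        slope (fun w => yx w t₀ k₀) x₀ w < 0 := hright.eventually_lt_const hlt
    have hIoo : Set.Ioo x₀ 1 ∈ nhdsWithin x₀ (Set.Ioi x₀) :=
      Ioo_mem_nhdsGT_of_mem ⟨le_refl x₀, hx₀Ioo.2⟩
    have hcomb : {w | yx w t₀ k₀ < 0 ∧ w ∈ Set.Ioo x₀ 1} ∈ nhdsWithin x₀ (Set.Ioi x₀) := by
      filter_upwards [hslope_neg, hIoo, self_mem_nhdsWithin] with w hw1 hw2 hw3
      refine ⟨?_, hw2⟩
      have hwpos : (0:ℝ) < w - x₀ := by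
        have : x₀ < w := hw3
        linarith
      have hslope : slope (fun w => yx w t₀ k₀) x₀ w
          = yx w t₀ k₀ / (w - x₀) := by
        rw [slope_def_field, hyx_zero, sub_zero]
      rw [hslope] at hw1
      rcases div_neg_iff.mp hw1 with h | h
      · exact absurd hwpos (not_lt.mpr h.2.le)
      · exact h.1
    obtain ⟨u, hu, hIoosub⟩ := mem_nhdsGT_iff_exists_Ioo_subset.mp hcomb
    set x₁ : ℝ := (x₀ + u) / 2 with hx₁def
    have hx₁mem : x₁ ∈ Set.Ioo x₀ u := by
      have hlt : x₀ < u := hu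
      constructor
      · rw [hx₁def]; linarith
      · rw [hx₁def]; linarith
    have hx₁prop := hIoosub hx₁mem
    have hx₁lt1 : x₁ < 1 := hx₁prop.2.2
    have hx₀lt : x₀ < x₁ := hx₁mem.1
    -- mean value theorem on [x₀, x₁]
    obtain ⟨c, hc, hceq⟩ := exists_hasDerivAt_eq_slope
      (fun w => y w t₀ k₀) (fun w => yx w t₀ k₀) hx₀lt
      (by
        intro w hw
        have hwIoo : w ∈ Set.Ioo (0:ℝ) 1 :=
          ⟨lt_of_lt_of_le hx₀Ioo.1 hw.1, lt_of_le_of_lt hw.2 hx₁lt1⟩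
        exact (hyx k₀ w hwIoo t₀ ht₀Ioc).continuousAt.continuousWithinAt)
      (by
        intro w hw
        have hwIoo : w ∈ Set.Ioo (0:ℝ) 1 :=
          ⟨lt_trans hx₀Ioo.1 hw.1, lt_trans hw.2 hx₁lt1⟩
        exact hyx k₀ w hwIoo t₀ ht₀Ioc)
    have hcIoo : c ∈ Set.Ioo x₀ u := ⟨hc.1, lt_of_lt_of_le hc.2 (le_of_lt hx₁mem.2)⟩
    have hcneg : yx c t₀ k₀ < 0 := (hIoosub hcIoo).1
    have hdiff : y x₁ t₀ k₀ - y x₀ t₀ k₀ < 0 := by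
      have hpos : (0:ℝ) < x₁ - x₀ := by linarith
      have := hceq
      have hq : (y x₁ t₀ k₀ - y x₀ t₀ k₀) / (x₁ - x₀) < 0 := by rw [← this]; exact hcneg
      exact (div_neg_iff.mp hq).elim (fun h => absurd hpos (not_lt.mpr h.2.le))
        (fun h => h.1)
    have hx₁Icc : x₁ ∈ Set.Icc (0:ℝ) 1 :=
      ⟨le_trans hx₀mem.1 hx₀lt.le, hx₁lt1.le⟩
    have := hglobal x₁ hx₁Icc t₀ ht₀mem k₀
    rw [hμdef] at this
    linarith
  -- the coupling sum is strictly negative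
  have hsum_le : ∑ m, a k₀ m x₀ * y x₀ t₀ m ≤ μ * βs := by
    have h1 : ∑ m, a k₀ m x₀ * y x₀ t₀ m ≤ μ * ∑ m, a k₀ m x₀ := by
      rw [Finset.mul_sum]
      apply Finset.sum_le_sum
      intro m _
      by_cases hmk : m = k₀
      · subst hmk
        rw [mul_comm]
      · have haoff : a k₀ m x₀ ≤ 0 := ha_off k₀ m (Ne.symm hmk) x₀ hx₀mem
        have hylb : μ ≤ y x₀ t₀ m := hglobal x₀ hx₀mem t₀ ht₀mem m
        calc a k₀ m x₀ * y x₀ t₀ m ≤ a k₀ m x₀ * μ :=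
              mul_le_mul_of_nonpos_left hylb haoff
          _ = μ * a k₀ m x₀ := mul_comm _ _
    have h2 : μ * ∑ m, a k₀ m x₀ ≤ μ * βs :=
      mul_le_mul_of_nonpos_left (ha_sum k₀ x₀ hx₀mem) hμneg.le
    linarith
  have hsum_neg : μ * βs < 0 := mul_neg_of_neg_of_pos hμneg hβs
  have hop := h_op x₀ hx₀Ioo t₀ ht₀Ioc k₀
  have hεyxx : 0 ≤ ε * yxx x₀ t₀ k₀ := mul_nonneg hε.1.le hyxx_nonneg
  linarith
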